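/- For n ≥ 2, the augmented cube AQ_n is vertex-transitive. -/

import Mathlib

/-- The augmented cube `AQ n` on vertex set `{0,1}^n`: distinct vertices `u, v` are
adjacent iff there is an index `k` such that they agree before `k` and either differ
only at `k` (hypercube-type edge) or differ at `k` and at every later coordinate
(complement-type edge). -/
def AQ (n : ℕ) : SimpleGraph (Fin n → Bool) where
  Adj u v := u ≠ v ∧ ∃ k : Fin n, (∀ i, i < k → u i = v i) ∧
      ((∀ i, i ≠ k → u i = v i) ∨ (∀ i, k ≤ i → u i ≠ v i))
  symm := ⟨by
    rintro u v ⟨hne, k, hpre, h⟩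
    refine ⟨hne.symm, k, fun i hi => (hpre i hi).symm, ?_⟩
    rcases h with h | h
    · exact Or.inl fun i hi => (h i hi).symm
    · exact Or.inr fun i hi e => h i hi e.symm⟩
  loopless := ⟨fun u h => h.1 rfl⟩

/-! Adjacency in `AQ n` only sees the set of coordinates where two vertices agree, and
translating both vertices by a fixed `w` (coordinatewise `xor`) preserves that set. The
translation by `u xor v` is therefore an automorphism sending `u` to `v`. -/

section XorTranslation

variable {ι : Type*}

def xorPerm (w : ι → Bool) : Equiv.Perm (ι → Bool) :=
  Function.Involutive.toPerm (fun x i => xor (x i) (w i)) fun x => by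
    funext i
    simp only [Bool.xor_assoc, Bool.xor_self, Bool.xor_false]

@[simp]
lemma xorPerm_apply (w x : ι → Bool) (i : ι) : xorPerm w x i = xor (x i) (w i) := rfl

lemma xorPerm_apply_eq_iff (w x y : ι → Bool) (i : ι) :
    xorPerm w x i = xorPerm w y i ↔ x i = y i :=
  Bool.xor_left_inj

lemma xorPerm_apply_xor (u v : ι → Bool) : xorPerm (fun i => xor (u i) (v i)) u = v := by
  funext i
  simp only [xorPerm_apply, ← Bool.xor_assoc, Bool.xor_self, Bool.false_xor]

theorem SimpleGraph.exists_iso_apply_eq_of_adj_congr (G : SimpleGraph (ι → Bool))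
    (hG : ∀ a b c d : ι → Bool, (∀ i, a i = b i ↔ c i = d i) → (G.Adj a b ↔ G.Adj c d))
    (u v : ι → Bool) : ∃ φ : G ≃g G, φ u = v :=
  ⟨⟨xorPerm fun i => xor (u i) (v i), fun {_ _} => hG _ _ _ _ fun _ => xorPerm_apply_eq_iff ..⟩,
    xorPerm_apply_xor u v⟩

end XorTranslation

lemma AQ_adj_congr {n : ℕ} (a b c d : Fin n → Bool) (h : ∀ i, a i = b i ↔ c i = d i) :
    (AQ n).Adj a b ↔ (AQ n).Adj c d := by
  simp only [AQ, ne_eq, funext_iff, h]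

theorem aq_vertex_transitive_general (n : ℕ) (u v : Fin n → Bool) :
    ∃ φ : AQ n ≃g AQ n, φ u = v :=
  (AQ n).exists_iso_apply_eq_of_adj_congr AQ_adj_congr u v

/-- For `n ≥ 2`, the augmented cube `AQ_n` is vertex-transitive. -/
theorem aq_vertex_transitive (n : ℕ) (hn : 2 ≤ n) (u v : Fin n → Bool) :
    ∃ φ : AQ n ≃g AQ n, φ u = v :=
  aq_vertex_transitive_general n u v
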